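/- arXiv:2304.01536 — 7 statements merged into one kernel-verified Lean document; each statement's English description precedes it below -/
import Mathlib

section
/- Let (X, μ) be a probability space and T : X → X a measure-preserving bijection. Then the support of T, i.e. the set {x ∈ X : T x ≠ x}, equals (up to null sets) the supremum (essential union) of the family of measurable sets A with T(A) ∩ A = ∅. -/
open MeasureTheory Set

/-- For a measure-preserving bijection `T` of a probability space,
the support `{x | T x ≠ x}` is, up to null sets, the supremum in the measure
algebra of the family of measurable sets `A` with `T(A) ∩ A = ∅` (i.e. null):
it is an upper bound for this family, and it is below any other upper bound. -/
theorem stmt0 {X : Type*} [MeasurableSpace X] [StandardBorelSpace X] (μ : Measure X) [IsProbabilityMeasure μ]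
    (T : X ≃ᵐ X) (hT : MeasurePreserving T μ μ) :
    (∀ A : Set X, MeasurableSet A → μ (T '' A ∩ A) = 0 → μ (A \ {x | T x ≠ x}) = 0) ∧
    (∀ B : Set X, MeasurableSet B →
      (∀ A : Set X, MeasurableSet A → μ (T '' A ∩ A) = 0 → μ (A \ B) = 0) →
      μ ({x | T x ≠ x} \ B) = 0) := by
  constructor
  · intro A hA h0
    refine measure_mono_null ?_ h0
    rintro x ⟨hxA, hx⟩
    simp only [mem_setOf_eq, not_not] at hx
    exact ⟨⟨x, hxA, hx⟩, hxA⟩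
  · intro B hB hub
    obtain ⟨S, hSc, hSm, hSsep⟩ :=
      exists_countable_separating X MeasurableSet univ
    have wander : ∀ s : Set X, MeasurableSet s → μ (((s ∩ T ⁻¹' sᶜ) \ B)) = 0 := by
      intro s hs
      apply hub
      · exact hs.inter (T.measurable hs.compl)
      · refine measure_mono_null ?_ (measure_empty (μ := μ))
        rintro x ⟨⟨y, ⟨hy1, hy2⟩, rfl⟩, hx1, _⟩
        exact hy2 hx1
    have key : {x | T x ≠ x} \ B ⊆
        ⋃ s ∈ S, (((s ∩ T ⁻¹' sᶜ) \ B) ∪ ((sᶜ ∩ T ⁻¹' s) \ B)) := by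
      rintro x ⟨hx, hxB⟩
      have : ¬ ∀ s ∈ S, x ∈ s ↔ T x ∈ s := fun h =>
        hx (hSsep x trivial (T x) trivial h).symm
      push_neg at this
      obtain ⟨s, hs, hiff⟩ := this
      rcases hiff with ⟨h1, h2⟩ | ⟨h1, h2⟩
      · exact mem_biUnion hs (Or.inl ⟨⟨h1, h2⟩, hxB⟩)
      · exact mem_biUnion hs (Or.inr ⟨⟨h1, h2⟩, hxB⟩)
    refine measure_mono_null key ?_
    refine (measure_biUnion_null_iff hSc).mpr fun s hs => ?_
    have hms := hSm s hs
    exact measure_union_null (wander s hms)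
      (by simpa using wander sᶜ hms.compl)
end

section
/- Let T, U be measure-preserving bijections of a probability space (X, μ), with T aperiodic when restricted to its support (i.e. for a.e. x ∈ supp(T), Tⁿ(x) ≠ x for all n ≥ 1). Then μ(supp(U Tⁿ) △ (supp T ∪ supp U)) → 0 as n → ∞. -/
open MeasureTheory Set Filter
open scoped symmDiff

/-- If `T, U` are measure-preserving bijections with `T` aperiodic on
its support, then `μ(supp(U ∘ Tⁿ) △ (supp T ∪ supp U)) → 0` as `n → ∞`. -/
theorem stmt5 {X : Type*} [MeasurableSpace X] (μ : Measure X) [IsProbabilityMeasure μ]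
    (T U : X ≃ᵐ X) (hT : MeasurePreserving T μ μ) (hU : MeasurePreserving U μ μ)
    (hmT : MeasurableSet {x | T x ≠ x}) (hmU : MeasurableSet {x | U x ≠ x})
    (hmn : ∀ n : ℕ, MeasurableSet {x | U ((⇑T)^[n] x) ≠ x})
    (haper : ∀ᵐ x ∂μ, T x ≠ x → ∀ n : ℕ, 1 ≤ n → (⇑T)^[n] x ≠ x) :
    Tendsto (fun n : ℕ =>
        μ ({x | U ((⇑T)^[n] x) ≠ x} ∆ ({x | T x ≠ x} ∪ {x | U x ≠ x})))
      atTop (nhds 0) := by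
  set A : ℕ → Set X := fun n => {x | T x ≠ x} ∩ {x | U ((⇑T)^[n] x) = x} with hAdef
  -- symmetric difference is contained in A n
  have hsub : ∀ n, ({x | U ((⇑T)^[n] x) ≠ x} ∆ ({x | T x ≠ x} ∪ {x | U x ≠ x})) ⊆ A n := by
    intro n x hx
    rcases Set.mem_symmDiff.mp hx with ⟨hB, hS⟩ | ⟨hS, hB⟩
    · -- x ∈ Bₙ but not in S : impossible
      exfalso
      simp only [Set.mem_union, Set.mem_setOf_eq, not_or, not_not] at hS
      obtain ⟨hTx, hUx⟩ := hS
      have : (⇑T)^[n] x = x := Function.iterate_fixed hTx n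
      exact hB (by simp [this, hUx])
    · -- x ∈ S, x ∉ Bₙ
      simp only [Set.mem_setOf_eq, not_not] at hB
      have hTx : T x ≠ x := by
        intro hfix
        have : (⇑T)^[n] x = x := Function.iterate_fixed hfix n
        rcases hS with h | h
        · exact h hfix
        · exact h (by rw [this] at hB; exact hB)
      exact ⟨hTx, hB⟩
  -- measurability of A n
  have hAmeas : ∀ n, MeasurableSet (A n) := by
    intro n
    have : {x | U ((⇑T)^[n] x) = x} = {x | U ((⇑T)^[n] x) ≠ x}ᶜ := by
      ext x; simp [not_not]
    exact hmT.inter (this ▸ (hmn n).compl)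
  -- the null set where aperiodicity may fail along some iterate
  set N : Set X := {x | ¬ (T x ≠ x → ∀ n : ℕ, 1 ≤ n → (⇑T)^[n] x ≠ x)} with hNdef
  have hN : μ N = 0 := ae_iff.mp haper
  set Nall : Set X := ⋃ k : ℕ, (⇑T)^[k] ⁻¹' N with hNalldef
  have hNall : μ Nall = 0 :=
    measure_iUnion_null fun k =>
      ((hT.iterate k).quasiMeasurePreserving).preimage_null hN
  -- a.e. disjointness
  have hdisj : Pairwise (Function.onFun (AEDisjoint μ) A) := by
    have key : ∀ n m : ℕ, n < m → A n ∩ A m ⊆ Nall := by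
      intro n m hnm x hx
      by_contra hxN
      simp only [hNalldef, Set.mem_iUnion, Set.mem_preimage, not_exists] at hxN
      obtain ⟨⟨hTx, hUn⟩, _, hUm⟩ := hx
      -- T^[n] x = T^[m] x
      have heq : (⇑T)^[n] x = (⇑T)^[m] x := U.injective (by rw [hUn, hUm])
      set y := (⇑T)^[n] x with hy
      have hiter : (⇑T)^[m - n] y = y := by
        have : (⇑T)^[m - n + n] x = (⇑T)^[m] x := by
          rw [Nat.sub_add_cancel hnm.le]
        rw [hy, ← Function.iterate_add_apply, this, ← heq]
      have hTy : T y ≠ y := by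
        intro hfix
        have h1 : (⇑T)^[n] (T x) = (⇑T)^[n] x := by
          rw [← Function.iterate_succ_apply, Function.iterate_succ_apply'] at *
          exact hfix
        exact hTx ((T.injective.iterate n) h1)
      have hyG : ¬ (T y ≠ y → ∀ k : ℕ, 1 ≤ k → (⇑T)^[k] y ≠ y) → False := hxN n
      exact hyG (fun h => (h hTy (m - n) (Nat.one_le_iff_ne_zero.mpr
        (Nat.sub_ne_zero_of_lt hnm))) hiter)
    intro n m hnm
    rcases hnm.lt_or_gt with h | h
    · exact measure_mono_null (key n m h) hNall
    · exact measure_mono_null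
        ((Set.inter_comm (A n) (A m)) ▸ key m n h) hNall
  -- sum of measures is finite, hence μ (A n) → 0
  have hsum : ∑' n, μ (A n) ≠ ⊤ := by
    rw [← measure_iUnion₀ hdisj (fun n => (hAmeas n).nullMeasurableSet)]
    exact (measure_lt_top μ _).ne
  have htend : Tendsto (fun n => μ (A n)) atTop (nhds 0) :=
    ENNReal.tendsto_atTop_zero_of_tsum_ne_top hsum
  exact tendsto_of_tendsto_of_tendsto_of_le_of_le tendsto_const_nhds htend
    (fun n => zero_le) (fun n => measure_mono (hsub n))
end

section
/- Let (X, μ) be a standard probability space, n ≥ 1, and let πₙ : Xⁿ → X^⊙n be the quotient by the permutation action of the symmetric group Sₙ, with pushforward measure μ^⊙n. For a measure-preserving bijection T of (X, μ), let ι^⊙n(T) be the induced measure-preserving bijection of X^⊙n given by [x₁,…,xₙ] ↦ [T x₁, …, T xₙ]. Then μ^⊙n(Fix(ι^⊙n(T))) = μ(Fix(T))ⁿ. -/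
/-!
If `T ∘ f = f ∘ σ` with `σ ≠ 1`, then some coordinate satisfies `f (σ i) = T (f i)` with
`σ i ≠ i`. Since `μ` has no atoms, Fubini makes such a coincidence between two distinct
coordinates a null event, so up to a null set only `σ = 1` contributes, and that piece is the
box `Fix(T)ⁿ`.
-/

open MeasureTheory Set

namespace MeasureTheory.Measure

variable {ι : Type*} [Fintype ι]

theorem pi_setOf_eval_eq_comp_eval_eq_zero {α : ι → Type*} [∀ i, MeasurableSpace (α i)]
    (μ : ∀ i, Measure (α i)) [∀ i, SigmaFinite (μ i)] {i j : ι} (hij : i ≠ j)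
    [MeasurableEq (α j)] [NullSingletonClass (μ j)] {g : α i → α j} (hg : Measurable g) :
    Measure.pi μ {f | f j = g (f i)} = 0 := by
  classical
  set D : Set ((∀ k : {k // k = j}, α k) × ∀ k : {k // k ≠ j}, α k) :=
    {q | q.1 ⟨j, rfl⟩ = g (q.2 ⟨i, hij⟩)}
  have hD : MeasurableSet D := measurableSet_eq_fun (by fun_prop) (by fun_prop)
  change Measure.pi μ (MeasurableEquiv.piEquivPiSubtypeProd α (· = j) ⁻¹' D) = 0
  rw [(measurePreserving_piEquivPiSubtypeProd μ _).measure_preimage hD.nullMeasurableSet,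
    prod_apply_symm hD]
  convert lintegral_zero with y
  convert pi_hyperplane (fun k : {k // k = j} => μ k) ⟨j, rfl⟩ (g (y ⟨i, hij⟩)) using 3
  rfl

variable {X : Type*} [MeasurableSpace X] [MeasurableEq X] (μ : Measure X) [SigmaFinite μ]
  [NullSingletonClass μ]

theorem pi_setOf_exists_ne_eval_eq_comp_eval_eq_zero {g : X → X} (hg : Measurable g) :
    Measure.pi (fun _ : ι => μ) {f | ∃ i j, i ≠ j ∧ f j = g (f i)} = 0 := by
  have : {f : ι → X | ∃ i j, i ≠ j ∧ f j = g (f i)} =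
      ⋃ (i) (j) (_ : i ≠ j), {f | f j = g (f i)} := by
    ext f; simp
  rw [this]
  exact measure_iUnion_null fun i => measure_iUnion_null fun j => measure_iUnion_null fun hij =>
    pi_setOf_eval_eq_comp_eval_eq_zero _ hij hg

theorem pi_setOf_exists_perm_comp_eq_comp {T : X → X} (hT : Measurable T) :
    Measure.pi (fun _ : ι => μ) {f | ∃ σ : Equiv.Perm ι, ∀ i, T (f i) = f (σ i)}
      = μ {x | T x = x} ^ Fintype.card ι := by
  set ν := Measure.pi (fun _ : ι => μ)
  set S := {f : ι → X | ∃ σ : Equiv.Perm ι, ∀ i, T (f i) = f (σ i)}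
  set F := Set.pi univ fun _ : ι => {x | T x = x}
  set C := {f : ι → X | ∃ i j, i ≠ j ∧ f j = T (f i)}
  have hFS : F ⊆ S := fun f hf => ⟨1, fun i => hf i trivial⟩
  have hSFC : S ⊆ F ∪ C := by
    rintro f ⟨σ, hσ⟩
    by_cases h : ∀ i, σ i = i
    · exact Or.inl fun i _ => (hσ i).trans (congrArg f (h i))
    · obtain ⟨i, hi⟩ := not_forall.1 h
      exact Or.inr ⟨i, σ i, Ne.symm hi, (hσ i).symm⟩
  have hSF : ν S = ν F := by
    refine le_antisymm ?_ (measure_mono hFS)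
    calc ν S ≤ ν (F ∪ C) := measure_mono hSFC
      _ ≤ ν F + ν C := measure_union_le F C
      _ = ν F := by rw [pi_setOf_exists_ne_eval_eq_comp_eval_eq_zero μ hT, add_zero]
  rw [hSF, pi_pi, Finset.prod_const, Finset.card_univ]

end MeasureTheory.Measure

theorem stmt9_general {X : Type*} [MeasurableSpace X] [StandardBorelSpace X]
    (μ : Measure X) [IsProbabilityMeasure μ] [NullSingletonClass μ]
    (n : ℕ) (T : X ≃ᵐ X) :
    Measure.pi (fun _ : Fin n => μ)
        {f : Fin n → X | ∃ σ : Equiv.Perm (Fin n), ∀ i, T (f i) = f (σ i)}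
      = μ {x | T x = x} ^ n := by
  simpa using Measure.pi_setOf_exists_perm_comp_eq_comp (ι := Fin n) μ T.measurable

/-- Let `πₙ : Xⁿ → X^⊙n` be the quotient by the symmetric group
`Sₙ`, with pushforward measure `μ^⊙n`, and let `ι^⊙n(T)` be the bijection of
`X^⊙n` induced by a measure-preserving bijection `T` of `(X, μ)`. Then
`μ^⊙n(Fix(ι^⊙n T)) = μ(Fix T)ⁿ`. Since `μ^⊙n` is the pushforward of `μ^⊗n`, the
left-hand side is the `μ^⊗n`-measure of `πₙ⁻¹(Fix(ι^⊙n T))`, which is the set of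
tuples `f` with `[T ∘ f] = [f]`, i.e. `T ∘ f = f ∘ σ` for some permutation `σ`. -/
theorem stmt9 {X : Type*} [MeasurableSpace X] [StandardBorelSpace X]
    (μ : Measure X) [IsProbabilityMeasure μ] [NullSingletonClass μ]
    (n : ℕ) (hn : 1 ≤ n) (T : X ≃ᵐ X) (hT : MeasurePreserving T μ μ) :
    Measure.pi (fun _ : Fin n => μ)
        {f : Fin n → X | ∃ σ : Equiv.Perm (Fin n), ∀ i, T (f i) = f (σ i)}
      = μ {x | T x = x} ^ n :=
  stmt9_general μ n T
end

section
/- Let ρ₁ : G → Aut(Y₁, ν₁) and ρ₂ : G → Aut(Y₂, ν₂) be two boolean actions of a group G, and suppose ρ₂(G) is totally non free, i.e. the measure algebra generated by {supp ρ₂(g) : g ∈ G} is all of MAlg(Y₂, ν₂). Then there is at most one support-preserving factor map φ : (Y₁, ν₁) → (Y₂, ν₂), i.e. at most one measure-preserving G-equivariant map with φ⁻¹(supp ρ₂(g)) = supp ρ₁(g) for all g ∈ G (equality in the measure algebra). -/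
open MeasureTheory Set
open scoped symmDiff

/-- If `ρ₂(G)` is totally non free (the measure algebra generated by
the supports `supp ρ₂(g)` is all of `MAlg(Y₂, ν₂)`), then there is at most one
support-preserving factor map `(Y₁, ν₁) → (Y₂, ν₂)`: any two such maps `φ, ψ`
induce the same embedding of measure algebras, i.e. `φ⁻¹(A) = ψ⁻¹(A)` mod null
for every measurable `A ⊆ Y₂`. -/
theorem stmt11 {G : Type*} [Group G] {Y₁ Y₂ : Type*}
    [MeasurableSpace Y₁] [MeasurableSpace Y₂]
    (ν₁ : Measure Y₁) (ν₂ : Measure Y₂)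
    [IsProbabilityMeasure ν₁] [IsProbabilityMeasure ν₂]
    (ρ₁ : G → Y₁ ≃ᵐ Y₁) (ρ₂ : G → Y₂ ≃ᵐ Y₂)
    (h₁mul : ∀ g h : G, ρ₁ (g * h) = (ρ₁ h).trans (ρ₁ g))
    (h₂mul : ∀ g h : G, ρ₂ (g * h) = (ρ₂ h).trans (ρ₂ g))
    (h₁mp : ∀ g, MeasurePreserving (ρ₁ g) ν₁ ν₁)
    (h₂mp : ∀ g, MeasurePreserving (ρ₂ g) ν₂ ν₂)
    -- total non-freeness of `ρ₂(G)`: every measurable set agrees mod null with a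
    -- set in the σ-algebra generated by the supports of the `ρ₂ g`:
    (hTNF : ∀ B : Set Y₂, MeasurableSet B → ∃ B' : Set Y₂,
      MeasurableSet[MeasurableSpace.generateFrom
        {S : Set Y₂ | ∃ g : G, S = {y | ρ₂ g y ≠ y}}] B' ∧ ν₂ (B ∆ B') = 0)
    (φ ψ : Y₁ → Y₂)
    (hφ : MeasurePreserving φ ν₁ ν₂) (hψ : MeasurePreserving ψ ν₁ ν₂)
    -- `φ` and `ψ` are factor maps:
    (hφeq : ∀ g, ∀ᵐ y ∂ν₁, φ (ρ₁ g y) = ρ₂ g (φ y))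
    (hψeq : ∀ g, ∀ᵐ y ∂ν₁, ψ (ρ₁ g y) = ρ₂ g (ψ y))
    -- `φ` and `ψ` are support-preserving:
    (hφsupp : ∀ g, ν₁ ((φ ⁻¹' {y | ρ₂ g y ≠ y}) ∆ {y | ρ₁ g y ≠ y}) = 0)
    (hψsupp : ∀ g, ν₁ ((ψ ⁻¹' {y | ρ₂ g y ≠ y}) ∆ {y | ρ₁ g y ≠ y}) = 0) :
    ∀ A : Set Y₂, MeasurableSet A → ν₁ ((φ ⁻¹' A) ∆ (ψ ⁻¹' A)) = 0 := by

  -- Preimages of null sets are null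
  have hz : ∀ (f : Y₁ → Y₂), MeasurePreserving f ν₁ ν₂ →
      ∀ s : Set Y₂, ν₂ s = 0 → ν₁ (f ⁻¹' s) = 0 := by
    intro f hf s hs
    have ht : ν₁ (f ⁻¹' toMeasurable ν₂ s) = 0 := by
      rw [hf.measure_preimage (measurableSet_toMeasurable ν₂ s).nullMeasurableSet,
        measure_toMeasurable, hs]
    exact measure_mono_null (preimage_mono (subset_toMeasurable ν₂ s)) ht
  -- the class of sets where φ and ψ agree mod null is a σ-algebra
  set p : Set Y₂ → Prop := fun s => ν₁ ((φ ⁻¹' s) ∆ (ψ ⁻¹' s)) = 0 with hp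
  have hm : MeasurableSpace.generateFrom
      {S : Set Y₂ | ∃ g : G, S = {y | ρ₂ g y ≠ y}} ≤
      MeasurableSpace.mk p
        (by simp [hp])
        (by
          intro s hs
          show ν₁ _ = 0
          rw [preimage_compl, preimage_compl, compl_symmDiff_compl]
          exact hs)
        (by
          intro f hf
          refine measure_mono_null ?_ (measure_iUnion_null hf)
          intro x hx
          rcases hx with ⟨hx1, hx2⟩ | ⟨hx1, hx2⟩
          · simp only [mem_preimage, mem_iUnion] at hx1 hx2
            push_neg at hx2
            obtain ⟨i, hi⟩ := hx1
            exact mem_iUnion.2 ⟨i, Or.inl ⟨hi, hx2 i⟩⟩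
          · simp only [mem_preimage, mem_iUnion] at hx1 hx2
            push_neg at hx2
            obtain ⟨i, hi⟩ := hx1
            exact mem_iUnion.2 ⟨i, Or.inr ⟨hi, hx2 i⟩⟩) := by
    apply MeasurableSpace.generateFrom_le
    rintro t ⟨g, rfl⟩
    show p _
    have h1 := hφsupp g
    have h2 := hψsupp g
    have := symmDiff_triangle (φ ⁻¹' {y | ρ₂ g y ≠ y}) {y | ρ₁ g y ≠ y}
      (ψ ⁻¹' {y | ρ₂ g y ≠ y})
    refine measure_mono_null this ?_
    refine measure_union_null h1 ?_
    rwa [symmDiff_comm]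
  intro A hA
  obtain ⟨B, hB, hAB⟩ := hTNF A hA
  have hpB : p B := hm B hB
  have t1 : ν₁ ((φ ⁻¹' A) ∆ (φ ⁻¹' B)) = 0 := by
    rw [← preimage_symmDiff]; exact hz φ hφ _ hAB
  have t3 : ν₁ ((ψ ⁻¹' B) ∆ (ψ ⁻¹' A)) = 0 := by
    rw [← preimage_symmDiff]
    exact hz ψ hψ _ (by rwa [symmDiff_comm])
  refine measure_mono_null
    (symmDiff_triangle (φ ⁻¹' A) (φ ⁻¹' B) (ψ ⁻¹' A)) ?_
  refine measure_union_null t1 ?_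
  refine measure_mono_null
    (symmDiff_triangle (φ ⁻¹' B) (ψ ⁻¹' B) (ψ ⁻¹' A)) ?_
  exact measure_union_null hpB t3
end

section
/- Let (X, μ) and (Z, η) be standard probability spaces (Z possibly with atoms). Then the measure algebra MAlg(X × Z, μ ⊗ η) is isometrically isomorphic to L⁰(X, μ; MAlg(Z, η)), the space of equivalence classes of measurable maps X → MAlg(Z, η), where MAlg(X × Z) carries the metric d(A,B) = (μ⊗η)(A △ B) and L⁰(X, μ; MAlg(Z, η)) carries the metric d(F,G) = ∫_X η(F(x) △ G(x)) dμ(x); the isomorphism sends a set A ⊆ X × Z to the map x ↦ [A_x] of its fibers. -/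
open MeasureTheory Set Filter
open scoped symmDiff ENNReal Topology

/-- `MAlg(X × Z, μ ⊗ η)` is isometrically isomorphic to
`L⁰(X, μ; MAlg(Z, η))` via the map sending a set `A ⊆ X × Z` to the map of its
fibers `x ↦ [A_x]`. Concretely: (a) the fiber map is isometric, i.e.
`(μ⊗η)(A △ B) = ∫ η(A_x △ B_x) dμ(x)` (whence injectivity mod null sets), and
(b) it is surjective: every measurable map `X → MAlg(Z, η)` (i.e. a fiberwise
choice `F` of measurable sets whose distance functions to measurable sets are
measurable) comes from a measurable `A ⊆ X × Z` with `A_x = F x` mod null for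
a.e. `x`. -/
theorem stmt14 {X Z : Type*} [MeasurableSpace X] [StandardBorelSpace X]
    [MeasurableSpace Z] [StandardBorelSpace Z]
    (μ : Measure X) (η : Measure Z) [IsProbabilityMeasure μ] [IsProbabilityMeasure η] :
    (∀ A B : Set (X × Z), MeasurableSet A → MeasurableSet B →
      (μ.prod η) (A ∆ B) = ∫⁻ x, η ({z | (x, z) ∈ A} ∆ {z | (x, z) ∈ B}) ∂μ) ∧
    (∀ F : X → Set Z, (∀ x, MeasurableSet (F x)) →
      (∀ B : Set Z, MeasurableSet B → Measurable fun x => η ((F x) ∆ B)) →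
      ∃ A : Set (X × Z), MeasurableSet A ∧
        ∀ᵐ x ∂μ, η ({z | (x, z) ∈ A} ∆ (F x)) = 0) := by
  constructor
  · intro A B hA hB
    rw [Measure.prod_apply (hA.symmDiff hB)]
    exact lintegral_congr fun x => rfl
  · intro F hF hmeas
    -- countable measure-dense family
    obtain ⟨𝒜, hc, hd⟩ := exists_countable_measureDense (μ := η)
    obtain ⟨D, hD⟩ := Set.Countable.exists_eq_range hc hd.nonempty
    have hDmem : ∀ k, D k ∈ 𝒜 := fun k => hD ▸ Set.mem_range_self k
    have hDm : ∀ k, MeasurableSet (D k) := fun k => hd.measurable _ (hDmem k)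
    -- for each n, x find a good approximation
    have hex : ∀ n : ℕ, ∀ x : X, ∃ k, η (F x ∆ D k) < 2⁻¹ ^ n := by
      intro n x
      obtain ⟨t, ht, hlt⟩ := hd.approx (F x) (hF x) (measure_ne_top η _) ((1/2) ^ n)
        (by positivity)
      rw [hD] at ht
      obtain ⟨k, rfl⟩ := ht
      have heq : ENNReal.ofReal ((1/2:ℝ) ^ n) = 2⁻¹ ^ n := by
        rw [ENNReal.ofReal_pow (by norm_num)]
        congr 1
        rw [one_div, ENNReal.ofReal_inv_of_pos (by norm_num : (0:ℝ) < 2)]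
        norm_num
      exact ⟨k, heq ▸ hlt⟩
    classical
    set kn : ℕ → X → ℕ := fun n x => Nat.find (hex n x) with hkn
    have hknm : ∀ n, Measurable (kn n) := by
      intro n
      apply measurable_find
      intro k
      exact measurableSet_lt (hmeas (D k) (hDm k)) measurable_const
    set S : ℕ → X → Set Z := fun n x => D (kn n x) with hS
    have hSapprox : ∀ n x, η (F x ∆ S n x) < 2⁻¹ ^ n := fun n x => Nat.find_spec (hex n x)
    -- the approximating sets
    set A : ℕ → Set (X × Z) := fun n => ⋃ k, ({x | kn n x = k} ×ˢ D k) with hA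
    have hAm : ∀ n, MeasurableSet (A n) :=
      fun n => MeasurableSet.iUnion fun k =>
        ((hknm n (measurableSet_singleton k))).prod (hDm k)
    have hAfiber : ∀ n x, {z | (x, z) ∈ A n} = S n x := by
      intro n x
      ext z
      simp only [hA, mem_iUnion, mem_setOf_eq, mem_prod]
      constructor
      · rintro ⟨k, hk, hz⟩; show z ∈ D (kn n x); rw [hk]; exact hz
      · intro hz; exact ⟨kn n x, rfl, hz⟩
    -- the limsup set
    refine ⟨⋂ N, ⋃ n, ⋃ (_ : N ≤ n), A n, MeasurableSet.iInter fun N =>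
      MeasurableSet.iUnion fun n => MeasurableSet.iUnion fun _ => hAm n, ?_⟩
    refine Eventually.of_forall fun x => ?_
    have hfiber : {z | (x, z) ∈ ⋂ N, ⋃ n, ⋃ (_ : N ≤ n), A n}
        = ⋂ N, ⋃ n, ⋃ (_ : N ≤ n), S n x := by
      ext z
      simp only [mem_setOf_eq, mem_iInter, mem_iUnion]
      refine forall_congr' fun N => exists_congr fun n => exists_congr fun h => ?_
      rw [← hAfiber n x]; rfl
    rw [hfiber]
    set L : Set Z := ⋂ N, ⋃ n, ⋃ (_ : N ≤ n), S n x with hL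
    -- tail bound machinery
    have tail : ∀ (T : ℕ → Set Z), (∀ n, η (T n) ≤ 2⁻¹ ^ n) → ∀ N : ℕ,
        η (⋃ n, ⋃ (_ : N ≤ n), T n) ≤ 2⁻¹ ^ N * 2 := by
      intro T hT N
      have : (⋃ n, ⋃ (_ : N ≤ n), T n) = ⋃ k, T (N + k) := by
        ext z
        simp only [mem_iUnion]
        constructor
        · rintro ⟨n, hn, hz⟩; exact ⟨n - N, by rwa [Nat.add_sub_cancel' hn]⟩
        · rintro ⟨k, hz⟩; exact ⟨N + k, Nat.le_add_right _ _, hz⟩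
      rw [this]
      calc η (⋃ k, T (N + k)) ≤ ∑' k, η (T (N + k)) := measure_iUnion_le _
        _ ≤ ∑' k : ℕ, 2⁻¹ ^ (N + k) := ENNReal.tsum_le_tsum fun k => hT _
        _ = 2⁻¹ ^ N * 2 := by
            simp only [pow_add, ENNReal.tsum_mul_left, ENNReal.tsum_geometric,
              ENNReal.one_sub_inv_two, inv_inv]
    have lim2 : Tendsto (fun N : ℕ => (2⁻¹ : ℝ≥0∞) ^ N * 2) atTop (𝓝 0) := by
      have := ENNReal.Tendsto.mul_const
        (ENNReal.tendsto_pow_atTop_nhds_zero_of_lt_one (by norm_num : (2⁻¹:ℝ≥0∞) < 1))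
        (Or.inr (by norm_num : (2:ℝ≥0∞) ≠ ⊤))
      simpa using this
    have hzero : ∀ (a : ℝ≥0∞), (∀ N, a ≤ 2⁻¹ ^ N * 2) → a = 0 := by
      intro a ha
      exact le_antisymm (ge_of_tendsto' lim2 ha) zero_le
    have hb1 : ∀ n, η (S n x \ F x) ≤ 2⁻¹ ^ n := by
      intro n
      refine le_trans (measure_mono ?_) (hSapprox n x).le
      intro z hz
      rw [Set.mem_symmDiff]
      exact Or.inr ⟨hz.1, hz.2⟩
    have hb2 : ∀ n, η (F x \ S n x) ≤ 2⁻¹ ^ n := by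
      intro n
      refine le_trans (measure_mono ?_) (hSapprox n x).le
      intro z hz
      rw [Set.mem_symmDiff]
      exact Or.inl ⟨hz.1, hz.2⟩
    rw [symmDiff_def]
    refine measure_union_null ?_ ?_
    · -- L \ F x
      refine hzero _ fun N => ?_
      refine le_trans (measure_mono ?_) (tail (fun n => S n x \ F x) hb1 N)
      intro z hz
      obtain ⟨hzL, hzF⟩ := hz
      have := mem_iInter.1 hzL N
      simp only [mem_iUnion] at this ⊢
      obtain ⟨n, hn, hzn⟩ := this
      exact ⟨n, hn, hzn, hzF⟩
    · -- F x \ L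
      refine hzero _ fun N => ?_
      refine le_trans (measure_mono ?_) (tail (fun n => F x \ S n x) hb2 N)
      intro z hz
      obtain ⟨hzF, hzL⟩ := hz
      simp only [hL, mem_iInter, mem_iUnion, not_forall, not_exists] at hzL
      obtain ⟨M, hM⟩ := hzL
      simp only [mem_iUnion]
      exact ⟨max N M, le_max_left _ _, hzF, hM _ (le_max_right _ _)⟩
end

section
/- Let (a, b) be a pair of independent standard (mean 0, variance 1) real Gaussian random variables and let θ ∈ [0, π]. Then P(a cos θ + b sin θ ≥ 0 and a < 0) + P(a cos θ + b sin θ < 0 and a ≥ 0) = θ/π. -/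
open MeasureTheory ProbabilityTheory Real


open Set

lemma gauss2_eq : (gaussianReal 0 1).prod (gaussianReal 0 1)
    = (volume : Measure (ℝ × ℝ)).withDensity
        (fun p => ENNReal.ofReal (gaussianPDFReal 0 1 p.1 * gaussianPDFReal 0 1 p.2)) := by
  refine Measure.prod_eq fun s t hs ht => ?_
  rw [withDensity_apply _ (hs.prod ht), Measure.volume_eq_prod, ← Measure.prod_restrict]
  have hmeas : Measurable (gaussianPDFReal 0 1) := measurable_gaussianPDFReal 0 1
  calc ∫⁻ p : ℝ × ℝ, ENNReal.ofReal (gaussianPDFReal 0 1 p.1 * gaussianPDFReal 0 1 p.2)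
        ∂(volume.restrict s).prod (volume.restrict t)
      = ∫⁻ p : ℝ × ℝ, ENNReal.ofReal (gaussianPDFReal 0 1 p.1)
          * ENNReal.ofReal (gaussianPDFReal 0 1 p.2)
          ∂(volume.restrict s).prod (volume.restrict t) := by
        congr 1; ext p
        rw [ENNReal.ofReal_mul (gaussianPDFReal_nonneg 0 1 p.1)]
    _ = (∫⁻ x in s, ENNReal.ofReal (gaussianPDFReal 0 1 x))
          * ∫⁻ y in t, ENNReal.ofReal (gaussianPDFReal 0 1 y) :=
        lintegral_prod_mul (hmeas.ennreal_ofReal.aemeasurable) (hmeas.ennreal_ofReal.aemeasurable)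
    _ = gaussianReal 0 1 s * gaussianReal 0 1 t := by
        rw [gaussianReal_apply 0 one_ne_zero s, gaussianReal_apply 0 one_ne_zero t]; rfl

lemma Gpolar (r φ : ℝ) : gaussianPDFReal 0 1 (r * cos φ) * gaussianPDFReal 0 1 (r * sin φ)
    = (2 * π)⁻¹ * exp (-(1/2) * r ^ 2) := by
  have h2π : (0:ℝ) ≤ 2 * π := by positivity
  simp only [gaussianPDFReal, NNReal.coe_one, mul_one, sub_zero]
  rw [show ((Real.sqrt (2 * π))⁻¹ * exp (-(r * cos φ) ^ 2 / 2)) *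
      ((Real.sqrt (2 * π))⁻¹ * exp (-(r * sin φ) ^ 2 / 2))
      = ((Real.sqrt (2 * π)) * (Real.sqrt (2 * π)))⁻¹ *
        (exp (-(r * cos φ) ^ 2 / 2) * exp (-(r * sin φ) ^ 2 / 2)) by ring]
  rw [Real.mul_self_sqrt h2π, ← Real.exp_add]
  congr 2
  have := sin_sq_add_cos_sq φ
  nlinarith [this]


lemma radial : ∫ r in Ioi (0:ℝ), r * exp (-(1/2) * r ^ 2) = 1 := by
  have hderiv : ∀ x ∈ Ioi (0:ℝ), HasDerivAt (fun r : ℝ => -exp (-(1/2) * r ^ 2))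
      (x * exp (-(1/2) * x ^ 2)) x := by
    intro x _
    have h1 : HasDerivAt (fun r : ℝ => -(1/2) * r ^ 2) (-(1/2) * (2 * x)) x := by
      simpa using (hasDerivAt_pow 2 x).const_mul (-(1/2 : ℝ))
    have h2 : HasDerivAt (fun r : ℝ => -exp (-(1/2) * r ^ 2)) _ x := (h1.exp).neg
    convert h2 using 1
    ring
  have hint : IntegrableOn (fun x : ℝ => x * exp (-(1/2) * x ^ 2)) (Ioi 0) := by
    have := integrable_mul_exp_neg_mul_sq (b := 1/2) (by norm_num)
    simpa [neg_mul] using this.integrableOn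
  have htend : Filter.Tendsto (fun r : ℝ => -exp (-(1/2) * r ^ 2)) Filter.atTop (nhds 0) := by
    rw [show (0:ℝ) = -0 by ring]
    refine Filter.Tendsto.neg ?_
    refine Real.tendsto_exp_atBot.comp ?_
    have h : Filter.Tendsto (fun r : ℝ => (1/2) * r ^ 2) Filter.atTop Filter.atTop :=
      (Filter.tendsto_pow_atTop two_ne_zero).const_mul_atTop one_half_pos
    simpa [neg_mul] using Filter.tendsto_neg_atBot_iff.mpr h
  have hcont : ContinuousWithinAt (fun r : ℝ => -exp (-(1/2) * r ^ 2)) (Ici 0) 0 :=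
    (Continuous.continuousWithinAt (by continuity))
  have := integral_Ioi_of_hasDerivAt_of_tendsto hcont hderiv hint htend
  simp at this
  simpa using this

lemma sector (θ : ℝ) (hθ : 0 ≤ θ) (S : Set (ℝ × ℝ)) (hS : MeasurableSet S)
    (A : Set ℝ) (hA : MeasurableSet A)
    (hvol : volume (A ∩ Ioo (-π) π) = ENNReal.ofReal θ)
    (hset : ∀ r φ : ℝ, 0 < r → ((r * cos φ, r * sin φ) ∈ S ↔ φ ∈ A)) :
    (gaussianReal 0 1).prod (gaussianReal 0 1) S = ENNReal.ofReal ((2 * π)⁻¹ * θ) := by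
  rw [gauss2_eq, withDensity_apply _ hS]
  set G : ℝ × ℝ → ℝ := fun p => gaussianPDFReal 0 1 p.1 * gaussianPDFReal 0 1 p.2 with hG
  have hGint : Integrable G := by
    have := (integrable_gaussianPDFReal 0 1).mul_prod (integrable_gaussianPDFReal 0 1)
    rwa [← Measure.volume_eq_prod] at this
  have hGnn : ∀ p, 0 ≤ G p := fun p =>
    mul_nonneg (gaussianPDFReal_nonneg 0 1 p.1) (gaussianPDFReal_nonneg 0 1 p.2)
  have h1 : ∫⁻ p in S, ENNReal.ofReal (G p) = ENNReal.ofReal (∫ p in S, G p) :=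
    (ofReal_integral_eq_lintegral_ofReal hGint.integrableOn
      (Filter.Eventually.of_forall fun p => hGnn p)).symm
  rw [h1]
  congr 1
  rw [← integral_indicator hS, ← integral_comp_polarCoord_symm (S.indicator G)]
  have h3 : ∫ p in polarCoord.target, p.1 • (S.indicator G) (polarCoord.symm p)
      = ∫ p in Ioi (0:ℝ) ×ˢ Ioo (-π) π,
          (fun r : ℝ => r * ((2 * π)⁻¹ * exp (-(1/2) * r ^ 2))) p.1
            * (A.indicator (fun _ => (1:ℝ))) p.2 := by
    rw [polarCoord_target]
    apply setIntegral_congr_fun (measurableSet_Ioi.prod measurableSet_Ioo)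
    rintro ⟨r, φ⟩ ⟨hr, hφ⟩
    simp only [polarCoord_symm_apply]
    by_cases hmem : φ ∈ A
    · rw [Set.indicator_of_mem ((hset r φ hr).mpr hmem) G, Set.indicator_of_mem hmem]
      simp only [smul_eq_mul, hG]
      rw [Gpolar]
      ring
    · rw [Set.indicator_of_notMem (fun h => hmem ((hset r φ hr).mp h)) G,
        Set.indicator_of_notMem hmem]
      simp
  rw [h3, Measure.volume_eq_prod,
    setIntegral_prod_mul (fun r : ℝ => r * ((2 * π)⁻¹ * exp (-(1/2) * r ^ 2)))
      (A.indicator (fun _ => (1:ℝ))) (Ioi (0:ℝ)) (Ioo (-π) π)]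
  have hrad : ∫ r in Ioi (0:ℝ), r * ((2 * π)⁻¹ * exp (-(1/2) * r ^ 2)) = (2 * π)⁻¹ := by
    have : (fun r : ℝ => r * ((2 * π)⁻¹ * exp (-(1/2) * r ^ 2)))
        = fun r : ℝ => (2 * π)⁻¹ * (r * exp (-(1/2) * r ^ 2)) := by ext r; ring
    rw [this, integral_const_mul, radial, mul_one]
  have hang : ∫ φ in Ioo (-π) π, (A.indicator (fun _ => (1:ℝ))) φ = θ := by
    rw [integral_indicator hA, setIntegral_const, measureReal_def, Measure.restrict_apply hA, hvol]
    simp [ENNReal.toReal_ofReal hθ]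
  rw [hrad, hang]


lemma cos_neg_of_mem (φ : ℝ) (hl : -π < φ) (hu : φ < π) (h : ¬ (-(π/2) ≤ φ ∧ φ ≤ π/2)) :
    cos φ < 0 := by
  rcases not_and_or.mp h with h | h
  · push_neg at h
    rw [← Real.cos_neg]
    exact Real.cos_neg_of_pi_div_two_lt_of_lt (by linarith) (by linarith)
  · push_neg at h
    exact Real.cos_neg_of_pi_div_two_lt_of_lt h (by linarith [pi_pos])

lemma vol2 (θ : ℝ) (hθ0 : 0 ≤ θ) (hθπ : θ ≤ π) :
    volume ({φ : ℝ | cos (φ - θ) < 0 ∧ 0 ≤ cos φ} ∩ Ioo (-π) π) = ENNReal.ofReal θ := by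
  have hπ := pi_pos
  have hsub1 : Ioo (-(π/2)) (θ - π/2) ⊆ {φ : ℝ | cos (φ - θ) < 0 ∧ 0 ≤ cos φ} ∩ Ioo (-π) π := by
    rintro φ ⟨l1, l2⟩
    refine ⟨⟨?_, ?_⟩, by linarith, by linarith⟩
    · have : φ - θ = -(θ - φ) := by ring
      rw [this, Real.cos_neg]
      exact Real.cos_neg_of_pi_div_two_lt_of_lt (by linarith) (by linarith)
    · exact Real.cos_nonneg_of_mem_Icc ⟨by linarith, by linarith⟩
  have hsub2 : {φ : ℝ | cos (φ - θ) < 0 ∧ 0 ≤ cos φ} ∩ Ioo (-π) π ⊆ Icc (-(π/2)) (θ - π/2) := by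
    rintro φ ⟨⟨h1, h2⟩, h3, h4⟩
    have hmem : -(π/2) ≤ φ ∧ φ ≤ π/2 := by
      by_contra h
      exact absurd h2 (not_le.mpr (cos_neg_of_mem φ h3 h4 h))
    refine ⟨hmem.1, ?_⟩
    by_contra h
    push_neg at h
    exact absurd (Real.cos_nonneg_of_mem_Icc ⟨by linarith, by linarith [hmem.2]⟩)
      (not_le.mpr h1)
  refine le_antisymm ?_ ?_
  · calc volume ({φ : ℝ | cos (φ - θ) < 0 ∧ 0 ≤ cos φ} ∩ Ioo (-π) π)
        ≤ volume (Icc (-(π/2)) (θ - π/2)) := measure_mono hsub2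
      _ = ENNReal.ofReal θ := by rw [Real.volume_Icc]; congr 1; ring
  · calc ENNReal.ofReal θ = volume (Ioo (-(π/2)) (θ - π/2)) := by
          rw [Real.volume_Ioo]; congr 1; ring
      _ ≤ _ := measure_mono hsub1

lemma vol1 (θ : ℝ) (hθ0 : 0 ≤ θ) (hθπ : θ ≤ π) :
    volume ({φ : ℝ | cos φ < 0 ∧ 0 ≤ cos (φ - θ)} ∩ Ioo (-π) π) = ENNReal.ofReal θ := by
  have hπ := pi_pos
  rcases le_or_gt θ (π/2) with hc | hc
  · have hsub1 : Ioo (π/2) (θ + π/2) ⊆ {φ : ℝ | cos φ < 0 ∧ 0 ≤ cos (φ - θ)} ∩ Ioo (-π) π := by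
      rintro φ ⟨l1, l2⟩
      refine ⟨⟨Real.cos_neg_of_pi_div_two_lt_of_lt l1 (by linarith), ?_⟩, by linarith, by linarith⟩
      exact Real.cos_nonneg_of_mem_Icc ⟨by linarith, by linarith⟩
    have hsub2 : {φ : ℝ | cos φ < 0 ∧ 0 ≤ cos (φ - θ)} ∩ Ioo (-π) π ⊆ Ioc (π/2) (θ + π/2) := by
      rintro φ ⟨⟨h1, h2⟩, h3, h4⟩
      constructor
      · by_contra h
        push_neg at h
        rcases le_or_gt (-(π/2)) φ with h' | h'
        · exact absurd (Real.cos_nonneg_of_mem_Icc ⟨h', h⟩) (not_le.mpr h1)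
        · have : φ - θ = -(θ - φ) := by ring
          rw [this, Real.cos_neg] at h2
          exact absurd h2 (not_le.mpr
            (Real.cos_neg_of_pi_div_two_lt_of_lt (by linarith) (by linarith)))
      · by_contra h
        push_neg at h
        exact absurd h2 (not_le.mpr
          (Real.cos_neg_of_pi_div_two_lt_of_lt (by linarith) (by linarith)))
    refine le_antisymm ?_ ?_
    · calc volume ({φ : ℝ | cos φ < 0 ∧ 0 ≤ cos (φ - θ)} ∩ Ioo (-π) π)
          ≤ volume (Ioc (π/2) (θ + π/2)) := measure_mono hsub2
        _ = ENNReal.ofReal θ := by rw [Real.volume_Ioc]; congr 1; ring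
    · calc ENNReal.ofReal θ = volume (Ioo (π/2) (θ + π/2)) := by
            rw [Real.volume_Ioo]; congr 1; ring
        _ ≤ _ := measure_mono hsub1
  · have hsub1 : Ioo (-π) (θ - 3*π/2) ∪ Ioo (π/2) π
        ⊆ {φ : ℝ | cos φ < 0 ∧ 0 ≤ cos (φ - θ)} ∩ Ioo (-π) π := by
      rintro φ (⟨l1, l2⟩ | ⟨l1, l2⟩)
      · refine ⟨⟨?_, ?_⟩, l1, by linarith⟩
        · rw [← Real.cos_neg]
          exact Real.cos_neg_of_pi_div_two_lt_of_lt (by linarith) (by linarith)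
        · rw [show φ - θ = (φ - θ + 2*π) - 2*π by ring, Real.cos_sub_two_pi]
          exact Real.cos_nonneg_of_mem_Icc ⟨by linarith, by linarith⟩
      · refine ⟨⟨Real.cos_neg_of_pi_div_two_lt_of_lt l1 (by linarith), ?_⟩, by linarith, l2⟩
        exact Real.cos_nonneg_of_mem_Icc ⟨by linarith, by linarith⟩
    have hsub2 : {φ : ℝ | cos φ < 0 ∧ 0 ≤ cos (φ - θ)} ∩ Ioo (-π) π
        ⊆ Ioc (-π) (θ - 3*π/2) ∪ Ioo (π/2) π := by
      rintro φ ⟨⟨h1, h2⟩, h3, h4⟩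
      rcases le_or_gt φ (π/2) with h' | h'
      · left
        have hneg : φ < -(π/2) := by
          by_contra h
          push_neg at h
          exact absurd (Real.cos_nonneg_of_mem_Icc ⟨h, h'⟩) (not_le.mpr h1)
        refine ⟨h3, ?_⟩
        by_contra h
        push_neg at h
        have : φ - θ = -(θ - φ) := by ring
        rw [this, Real.cos_neg] at h2
        exact absurd h2 (not_le.mpr
          (Real.cos_neg_of_pi_div_two_lt_of_lt (by linarith) (by linarith)))
      · exact Or.inr ⟨h', h4⟩
    have hdisj1 : Disjoint (Ioo (-π) (θ - 3*π/2)) (Ioo (π/2) π) := by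
      rw [Set.disjoint_left]
      rintro φ ⟨_, l2⟩ ⟨r1, _⟩
      linarith
    have hdisj2 : Disjoint (Ioc (-π) (θ - 3*π/2)) (Ioo (π/2) π) := by
      rw [Set.disjoint_left]
      rintro φ ⟨_, l2⟩ ⟨r1, _⟩
      linarith
    refine le_antisymm ?_ ?_
    · calc volume ({φ : ℝ | cos φ < 0 ∧ 0 ≤ cos (φ - θ)} ∩ Ioo (-π) π)
          ≤ volume (Ioc (-π) (θ - 3*π/2) ∪ Ioo (π/2) π) := measure_mono hsub2
        _ = ENNReal.ofReal θ := by
            rw [measure_union hdisj2 measurableSet_Ioo, Real.volume_Ioc, Real.volume_Ioo,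
              ← ENNReal.ofReal_add (by linarith) (by linarith)]
            congr 1; ring
    · calc ENNReal.ofReal θ = volume (Ioo (-π) (θ - 3*π/2) ∪ Ioo (π/2) π) := by
            rw [measure_union hdisj1 measurableSet_Ioo, Real.volume_Ioo, Real.volume_Ioo,
              ← ENNReal.ofReal_add (by linarith) (by linarith)]
            congr 1; ring
        _ ≤ _ := measure_mono hsub1


/-- If `(a, b)` is a pair of independent standard real Gaussian
random variables and `θ ∈ [0, π]`, then
`P(a cos θ + b sin θ ≥ 0 and a < 0) + P(a cos θ + b sin θ < 0 and a ≥ 0) = θ/π`. -/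
theorem stmt16 (θ : ℝ) (hθ0 : 0 ≤ θ) (hθπ : θ ≤ π) :
    ((gaussianReal 0 1).prod (gaussianReal 0 1))
        {p : ℝ × ℝ | 0 ≤ p.1 * Real.cos θ + p.2 * Real.sin θ ∧ p.1 < 0}
      + ((gaussianReal 0 1).prod (gaussianReal 0 1))
        {p : ℝ × ℝ | p.1 * Real.cos θ + p.2 * Real.sin θ < 0 ∧ 0 ≤ p.1}
      = ENNReal.ofReal (θ / π) := by
  have hπ := pi_pos
  have hS1 : MeasurableSet {p : ℝ × ℝ | 0 ≤ p.1 * Real.cos θ + p.2 * Real.sin θ ∧ p.1 < 0} := by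
    rw [Set.setOf_and]
    exact (measurableSet_le measurable_const (by fun_prop)).inter
      (measurableSet_lt (by fun_prop) measurable_const)
  have hS2 : MeasurableSet {p : ℝ × ℝ | p.1 * Real.cos θ + p.2 * Real.sin θ < 0 ∧ 0 ≤ p.1} := by
    rw [Set.setOf_and]
    exact (measurableSet_lt (by fun_prop) measurable_const).inter
      (measurableSet_le measurable_const (by fun_prop))
  have hA1 : MeasurableSet {φ : ℝ | cos φ < 0 ∧ 0 ≤ cos (φ - θ)} := by
    rw [Set.setOf_and]
    exact (measurableSet_lt (by fun_prop) measurable_const).inter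
      (measurableSet_le measurable_const (by fun_prop))
  have hA2 : MeasurableSet {φ : ℝ | cos (φ - θ) < 0 ∧ 0 ≤ cos φ} := by
    rw [Set.setOf_and]
    exact (measurableSet_lt (by fun_prop) measurable_const).inter
      (measurableSet_le measurable_const (by fun_prop))
  have hset1 : ∀ r φ : ℝ, 0 < r →
      ((r * cos φ, r * sin φ) ∈ {p : ℝ × ℝ | 0 ≤ p.1 * Real.cos θ + p.2 * Real.sin θ ∧ p.1 < 0}
        ↔ φ ∈ {φ : ℝ | cos φ < 0 ∧ 0 ≤ cos (φ - θ)}) := by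
    intro r φ hr
    simp only [Set.mem_setOf_eq]
    have key : r * cos φ * Real.cos θ + r * sin φ * Real.sin θ = r * cos (φ - θ) := by
      rw [Real.cos_sub]; ring
    have c2 : r * cos φ < 0 ↔ cos φ < 0 :=
      ⟨fun h => by nlinarith, fun h => by nlinarith⟩
    rw [key, mul_nonneg_iff_of_pos_left hr, c2, and_comm]
  have hset2 : ∀ r φ : ℝ, 0 < r →
      ((r * cos φ, r * sin φ) ∈ {p : ℝ × ℝ | p.1 * Real.cos θ + p.2 * Real.sin θ < 0 ∧ 0 ≤ p.1}
        ↔ φ ∈ {φ : ℝ | cos (φ - θ) < 0 ∧ 0 ≤ cos φ}) := by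
    intro r φ hr
    simp only [Set.mem_setOf_eq]
    have key : r * cos φ * Real.cos θ + r * sin φ * Real.sin θ = r * cos (φ - θ) := by
      rw [Real.cos_sub]; ring
    have c2 : r * cos (φ - θ) < 0 ↔ cos (φ - θ) < 0 :=
      ⟨fun h => by nlinarith, fun h => by nlinarith⟩
    rw [key, c2, mul_nonneg_iff_of_pos_left hr]
  rw [sector θ hθ0 _ hS1 _ hA1 (vol1 θ hθ0 hθπ) hset1,
    sector θ hθ0 _ hS2 _ hA2 (vol2 θ hθ0 hθπ) hset2,
    ← ENNReal.ofReal_add (mul_nonneg (by positivity) hθ0) (mul_nonneg (by positivity) hθ0)]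
  congr 1
  field_simp
  ring
end

section
/- Let G be a group of measure-preserving bijections of (X, μ) with the property that every measurable set is (up to null sets) the support of some element of G. Suppose S₁, S₂ ∈ Aut(X, μ) satisfy S₁ T S₁⁻¹ = S₂ T S₂⁻¹ for all T ∈ G. Then S₁ = S₂ in Aut(X, μ) (i.e. S₁(x) = S₂(x) for almost every x). -/
open MeasureTheory Set
open scoped symmDiff

/-- Let `G` be a set of measure-preserving bijections of `(X, μ)`
such that every measurable set is (up to null sets) the support of some element
of `G`. If `S₁, S₂ ∈ Aut(X, μ)` satisfy `S₁ T S₁⁻¹ = S₂ T S₂⁻¹` (as elements of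
`Aut(X,μ)`, i.e. almost everywhere) for all `T ∈ G`, then `S₁ = S₂` in
`Aut(X, μ)`, i.e. `S₁ x = S₂ x` for almost every `x`. -/
theorem stmt17 {X : Type*} [MeasurableSpace X] [StandardBorelSpace X]
    (μ : Measure X) [IsProbabilityMeasure μ]
    (G : Set (X ≃ᵐ X)) (hGmp : ∀ T ∈ G, MeasurePreserving T μ μ)
    (hGsupp : ∀ A : Set X, MeasurableSet A →
      ∃ T ∈ G, μ ({x | T x ≠ x} ∆ A) = 0)
    (S₁ S₂ : X ≃ᵐ X) (h₁ : MeasurePreserving S₁ μ μ) (h₂ : MeasurePreserving S₂ μ μ)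
    (hconj : ∀ T ∈ G, ∀ᵐ x ∂μ, S₁ (T (S₁.symm x)) = S₂ (T (S₂.symm x))) :
    ∀ᵐ x ∂μ, S₁ x = S₂ x := by
  have h₁s : MeasurePreserving S₁.symm μ μ := h₁.symm S₁
  have h₂s : MeasurePreserving S₂.symm μ μ := h₂.symm S₂
  -- key claim: preimages under the inverses agree a.e. for every measurable set
  have key : ∀ U : Set X, MeasurableSet U →
      (S₁.symm : X → X) ⁻¹' U =ᵐ[μ] (S₂.symm : X → X) ⁻¹' U := by
    intro U hU
    obtain ⟨T, hTG, hT⟩ := hGsupp U hU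
    set D : Set X := {x | T x ≠ x} with hD
    have hDU : D =ᵐ[μ] U := measure_symmDiff_eq_zero_iff.mp hT
    have hsupp : (S₁.symm : X → X) ⁻¹' D =ᵐ[μ] (S₂.symm : X → X) ⁻¹' D := by
      filter_upwards [hconj T hTG] with x hx
      have e1 : (T (S₁.symm x) = S₁.symm x) ↔ (S₁ (T (S₁.symm x)) = x) := by
        constructor
        · intro h; rw [h]; exact S₁.apply_symm_apply x
        · intro h
          have := S₁.injective (a₁ := T (S₁.symm x)) (a₂ := S₁.symm x)
          exact this (by rw [h, S₁.apply_symm_apply])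
      have e2 : (T (S₂.symm x) = S₂.symm x) ↔ (S₂ (T (S₂.symm x)) = x) := by
        constructor
        · intro h; rw [h]; exact S₂.apply_symm_apply x
        · intro h
          have := S₂.injective (a₁ := T (S₂.symm x)) (a₂ := S₂.symm x)
          exact this (by rw [h, S₂.apply_symm_apply])
      show (S₁.symm x ∈ D) = (S₂.symm x ∈ D)
      simp only [hD, mem_setOf_eq, ne_eq, e1, e2, hx]
    exact ((h₁s.quasiMeasurePreserving.preimage_ae_eq hDU.symm).trans hsupp).trans
      (h₂s.quasiMeasurePreserving.preimage_ae_eq hDU)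
  have hsymm : (S₁.symm : X → X) =ᵐ[μ] (S₂.symm : X → X) :=
    Filter.EventuallyEq.of_forall_separating_preimage MeasurableSet key
  -- transfer via S₁
  have := hsymm.comp_tendsto h₁.quasiMeasurePreserving.tendsto_ae
  filter_upwards [this] with x hx
  have : x = S₂.symm (S₁ x) := by
    simpa [Function.comp] using hx
  calc S₁ x = S₂ (S₂.symm (S₁ x)) := (S₂.apply_symm_apply _).symm
    _ = S₂ x := by rw [← this]
end
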